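/- arXiv:2009.05157 — 3 statements merged into one kernel-verified Lean document; each statement's English description precedes it below -/
import Mathlib

section
/- Let π be a pairing of {1,...,m} (m even) regarded as a fixed-point-free involution in S_m, and let γ = (1,2,...,m) be the full cycle. Then the number of cycles of γπ satisfies #cycles(γπ) ≤ m/2 + 1. -/
/-- The number of cycles of a permutation of `Fin m` (fixed points counted as
cycles of length one). -/
def cycleCount {m : ℕ} (σ : Equiv.Perm (Fin m)) : ℕ :=
  Multiset.card σ.cycleType + (Finset.univ.filter fun x => σ x = x).card

/-!
Let `N σ` be the number of orbits of `⟨σ⟩`. The orbits of `σ * swap a b` refine the partition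
obtained from the orbits of `σ` by merging those of `a` and `b`, so `N σ ≤ N (σ * swap a b) + 1`.
A cycle with support of size `k` is a product of `k - 1` transpositions, hence
`N σ + c τ ≤ N (σ * τ) + #supp τ` for every `τ`, where `c τ` counts the nontrivial cycles of `τ`.
For `σ = γπ` and `τ = π`, where `c π = m / 2` and `#supp π = m`, this reads
`N (γπ) + m / 2 ≤ N γ + m`, and `N γ ≤ 1`.
-/

open Equiv Finset

theorem Nat.card_le_card_add_one_of_forall_ne_mem_range {α β : Type*} [Finite α] [Finite β]
    {f : β → α} (a : α) (hf : ∀ x ≠ a, x ∈ Set.range f) : Nat.card α ≤ Nat.card β + 1 := by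
  classical
  have := Fintype.ofFinite α
  have := Fintype.ofFinite β
  have hsub : (univ : Finset α) ⊆ insert a (univ.image f) := fun x _ => by
    by_cases hx : x = a
    · simp [hx]
    · obtain ⟨y, rfl⟩ := hf x hx
      simp
  calc Nat.card α = #(univ : Finset α) := by simp
    _ ≤ #(univ.image f) + 1 := (card_le_card hsub).trans (card_insert_le _ _)
    _ ≤ Nat.card β + 1 := by simpa using Finset.card_image_le (s := univ) (f := f)

namespace Equiv.Perm

variable {α β : Type*}

noncomputable def orbitCount (σ : Perm α) : ℕ := Nat.card (Quotient (SameCycle.setoid σ))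

theorem SameCycle.apply_eq_of_forall_apply_eq {f : Perm α} {g : α → β}
    (hg : ∀ x, g (f x) = g x) {x y : α} (h : f.SameCycle x y) : g x = g y := by
  obtain ⟨i, rfl⟩ := h
  induction i using Int.induction_on generalizing x with
  | zero => rfl
  | succ i ih => rw [zpow_add_one, mul_apply, ← ih, hg]
  | pred i ih => rw [zpow_sub_one, mul_apply, ← ih, ← hg (f⁻¹ x), Perm.coe_inv, apply_symm_apply]

theorem orbitCount_le_orbitCount_mul_swap_add_one [Finite α] [DecidableEq α]
    (σ : Perm α) (a b : α) : σ.orbitCount ≤ (σ * swap a b).orbitCount + 1 := by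
  classical
  -- `f` is the quotient map to `σ`-orbits, except that the orbit of `b` goes to that of `a`;
  -- it is constant on `σ * swap a b`-orbits and its range misses at most the orbit of `b`.
  let f : α → Quotient (SameCycle.setoid σ) := fun x => if σ.SameCycle x b then ⟦a⟧ else ⟦x⟧
  have hσ : ∀ x, f (σ x) = f x := fun x => by
    simp only [f, sameCycle_apply_left]
    split_ifs
    · rfl
    · exact Quotient.sound (sameCycle_apply_left.2 (SameCycle.refl σ x))
  have hswap : ∀ x, f (swap a b x) = f x := fun x => by
    have hab : f a = f b := by simp [f, SameCycle.refl σ b]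
    rcases eq_or_ne x a with rfl | hxa
    · rw [swap_apply_left, hab]
    rcases eq_or_ne x b with rfl | hxb
    · rw [swap_apply_right, hab]
    · rw [swap_apply_of_ne_of_ne hxa hxb]
  let g : Quotient (SameCycle.setoid (σ * swap a b)) → Quotient (SameCycle.setoid σ) :=
    Quotient.lift f fun _ _ (h : (σ * swap a b).SameCycle _ _) =>
      h.apply_eq_of_forall_apply_eq fun x => by rw [mul_apply, hσ, hswap]
  refine Nat.card_le_card_add_one_of_forall_ne_mem_range (f := g) ⟦b⟧ ?_
  rintro ⟨x⟩ hx
  exact ⟨⟦x⟧, if_neg fun (h : σ.SameCycle x b) => hx (Quotient.sound h)⟩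

variable [Fintype α] [DecidableEq α]

def cycleOrFixedPoint (σ : Perm α) (x : α) : σ.cycleFactorsFinset ⊕ {x // σ x = x} :=
  if h : σ x = x then .inr ⟨x, h⟩
  else .inl ⟨σ.cycleOf x, cycleOf_mem_cycleFactorsFinset_iff.2 (mem_support.2 h)⟩

theorem cycleOrFixedPoint_eq_iff {σ : Perm α} {x y : α} :
    σ.cycleOrFixedPoint x = σ.cycleOrFixedPoint y ↔ σ.SameCycle x y := by
  unfold cycleOrFixedPoint
  by_cases hx : σ x = x <;> by_cases hy : σ y = y <;> simp only [hx, hy, dite_true, dite_false]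
  · simp only [Sum.inr.injEq, Subtype.mk.injEq]
    exact ⟨fun h => h ▸ SameCycle.refl σ x, fun h => h.eq_of_left hx⟩
  · simp only [reduceCtorEq, false_iff]
    exact fun h => hy (h.apply_eq_self_iff.1 hx)
  · simp only [reduceCtorEq, false_iff]
    exact fun h => hx (h.apply_eq_self_iff.2 hy)
  · simp only [Sum.inl.injEq, Subtype.mk.injEq]
    exact (sameCycle_iff_cycleOf_eq_of_mem_support (mem_support.2 hx) (mem_support.2 hy)).symm

theorem cycleOrFixedPoint_surjective (σ : Perm α) : Function.Surjective σ.cycleOrFixedPoint := by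
  rintro (⟨c, hc⟩ | ⟨x, hx⟩)
  · obtain ⟨x, hxc⟩ := (mem_cycleFactorsFinset_iff.1 hc).1.nonempty_support
    have hσx : σ x ≠ x := mem_support.1 (mem_cycleFactorsFinset_support_le hc hxc)
    refine ⟨x, ?_⟩
    simp only [cycleOrFixedPoint, hσx, dite_false, cycle_is_cycleOf hxc hc]
  · exact ⟨x, by simp only [cycleOrFixedPoint, hx, dite_true]⟩

theorem orbitCount_eq_card_cycleType_add_card_fixedPoints (σ : Perm α) :
    σ.orbitCount = Multiset.card σ.cycleType + #{x | σ x = x} := by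
  let e : Quotient (SameCycle.setoid σ) → σ.cycleFactorsFinset ⊕ {x // σ x = x} :=
    Quotient.lift σ.cycleOrFixedPoint fun _ _ => cycleOrFixedPoint_eq_iff.2
  have he : Function.Bijective e := by
    constructor
    · rintro ⟨x⟩ ⟨y⟩ h
      exact Quotient.sound (cycleOrFixedPoint_eq_iff.1 h)
    · intro s
      obtain ⟨x, rfl⟩ := σ.cycleOrFixedPoint_surjective s
      exact ⟨⟦x⟧, rfl⟩
  rw [orbitCount, Nat.card_eq_of_bijective e he, Nat.card_sum, cycleType_def, Multiset.card_map]
  simp [Fintype.card_subtype]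

theorem orbitCount_le_orbitCount_mul_formPerm_add_length (σ : Perm α) (x : α) (l : List α) :
    σ.orbitCount ≤ (σ * (x :: l).formPerm).orbitCount + l.length := by
  induction l generalizing σ x with
  | nil => simp
  | cons y l ih =>
    calc σ.orbitCount ≤ (σ * swap x y).orbitCount + 1 :=
          orbitCount_le_orbitCount_mul_swap_add_one σ x y
      _ ≤ (σ * swap x y * (y :: l).formPerm).orbitCount + l.length + 1 := by
          gcongr; exact ih _ y
      _ = (σ * (x :: y :: l).formPerm).orbitCount + (y :: l).length := by
          rw [List.formPerm_cons_cons, mul_assoc, List.length_cons, add_assoc]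

theorem IsCycle.orbitCount_add_one_le {c : Perm α} (hc : c.IsCycle) (σ : Perm α) :
    σ.orbitCount + 1 ≤ (σ * c).orbitCount + #c.support := by
  obtain ⟨x, hx⟩ := hc.nonempty_support
  have hcx : c.cycleOf x = c := hc.cycleOf_eq (mem_support.1 hx)
  have hform : (c.toList x).formPerm = c := by rw [formPerm_toList, hcx]
  have hlen : (c.toList x).length = #c.support := by rw [length_toList, hcx]
  obtain ⟨y, l, hyl⟩ := List.exists_cons_of_ne_nil (toList_eq_nil_iff.not.2 (not_not.2 hx))
  rw [hyl] at hform hlen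
  have := orbitCount_le_orbitCount_mul_formPerm_add_length σ y l
  rw [hform] at this
  rw [← hlen, List.length_cons]
  omega

theorem orbitCount_add_card_cycleType_le (σ τ : Perm α) :
    σ.orbitCount + Multiset.card τ.cycleType ≤ (σ * τ).orbitCount + #τ.support := by
  induction τ using cycle_induction_on generalizing σ with
  | base_one => simp
  | base_cycles c hc => simpa [hc.cycleType] using hc.orbitCount_add_one_le σ
  | induction_disjoint τ₁ τ₂ hd _ ih₁ ih₂ =>
    have h₁ := ih₁ σ
    have h₂ := ih₂ (σ * τ₁)
    rw [hd.cycleType_mul, Multiset.card_add, hd.card_support_mul, ← mul_assoc]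
    omega

theorem two_mul_card_cycleType_of_mul_self_eq_one {π : Perm α} (hπ : π * π = 1) :
    2 * Multiset.card π.cycleType = #π.support := by
  have htwo : ∀ n ∈ π.cycleType, n = 2 := fun n hn =>
    (Nat.le_of_dvd two_pos ((dvd_of_mem_cycleType hn).trans
      (orderOf_dvd_of_pow_eq_one (by rwa [sq])))).antisymm (two_le_of_mem_cycleType hn)
  rw [← sum_cycleType, Multiset.eq_replicate_of_mem htwo, Multiset.sum_replicate,
    Multiset.card_replicate, smul_eq_mul, mul_comm]

end Equiv.Perm

theorem orbitCount_finRotate_le_one (m : ℕ) : (finRotate m).orbitCount ≤ 1 := by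
  rw [Perm.orbitCount, Finite.card_le_one_iff_subsingleton]
  refine ⟨fun p q => Quotient.inductionOn₂ p q fun x y => Quotient.sound ?_⟩
  rcases m with _ | _ | n
  · exact x.elim0
  · obtain rfl : x = y := Fin.ext (by omega)
    exact Perm.SameCycle.refl _ x
  · exact isCycle_finRotate.sameCycle (by simp) (by simp)

theorem cycleCount_le_general (m : ℕ) (π : Equiv.Perm (Fin m))
    (hinv : π * π = 1) (hfix : ∀ i, π i ≠ i) :
    cycleCount (finRotate m * π) ≤ m / 2 + 1 := by
  have hsupp : #π.support = m := by
    rw [Finset.eq_univ_of_forall fun i => Perm.mem_support.2 (hfix i), card_univ, Fintype.card_fin]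
  have key := Perm.orbitCount_add_card_cycleType_le (finRotate m * π) π
  rw [mul_assoc, hinv, mul_one, hsupp] at key
  have hpairs := Perm.two_mul_card_cycleType_of_mul_self_eq_one hinv
  have hγ := orbitCount_finRotate_le_one m
  rw [cycleCount, ← Perm.orbitCount_eq_card_cycleType_add_card_fixedPoints]
  omega

/-- If `π` is a pairing of `{1,...,m}` (`m` even), regarded as a fixed-point-free
involution, and `γ = (1,2,...,m)` is the full cycle, then `#cycles(γπ) ≤ m/2 + 1`. -/
theorem cycleCount_le (m : ℕ) (hm : Even m) (π : Equiv.Perm (Fin m))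
    (hinv : π * π = 1) (hfix : ∀ i, π i ≠ i) :
    cycleCount (finRotate m * π) ≤ m / 2 + 1 :=
  cycleCount_le_general m π hinv hfix
end

section
/- Stieltjes inversion: for a finite Borel measure μ on ℝ with Stieltjes transform S, and for any a < b, lim_{ε↘0} (1/π) ∫_a^b Im S(x + iε) dx = μ((a,b)) + (1/2) μ({a,b}). -/
/-!
For `ε > 0`, `Im (t - (x + iε))⁻¹ = ε / ((t - x)² + ε²)` is (π times) the Poisson kernel, whose
integral over `x ∈ [a, b]` is `arctan ((b - t) / ε) - arctan ((a - t) / ε)`. By Fubini the quantity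
in question is therefore `(1/π) ∫ (arctan ((b - t) / ε) - arctan ((a - t) / ε)) dμ(t)`. The
integrand is bounded by `π` and tends to `π/2 · (sign (b - t) - sign (a - t))`, which is `π` on
`(a, b)`, `π/2` at `a` and `b` and `0` elsewhere, so dominated convergence gives the limit.
-/

open MeasureTheory Filter intervalIntegral

open Real Set Topology

lemma Complex.im_inv_ofReal_sub_ofReal_add_mul_I (t x ε : ℝ) :
    (((t : ℂ) - (x + ε * Complex.I))⁻¹).im = ε / ((t - x) ^ 2 + ε ^ 2) := by
  simp only [Complex.inv_im, Complex.normSq_apply, Complex.sub_re, Complex.sub_im,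
    Complex.add_re, Complex.add_im, Complex.mul_re, Complex.mul_im, Complex.ofReal_re,
    Complex.ofReal_im, Complex.I_re, Complex.I_im]
  ring

lemma Complex.norm_inv_ofReal_sub_le {z : ℂ} (hz : z.im ≠ 0) (t : ℝ) :
    ‖((t : ℂ) - z)⁻¹‖ ≤ |z.im|⁻¹ := by
  rw [norm_inv]
  refine inv_anti₀ (abs_pos.2 hz) ?_
  simpa using Complex.abs_im_le_norm ((t : ℂ) - z)

lemma integrable_inv_ofReal_sub (μ : Measure ℝ) [IsFiniteMeasure μ] {z : ℂ} (hz : z.im ≠ 0) :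
    Integrable (fun t : ℝ => ((t : ℂ) - z)⁻¹) μ :=
  (integrable_const |z.im|⁻¹).mono' (by fun_prop)
    (Eventually.of_forall (Complex.norm_inv_ofReal_sub_le hz))

lemma integral_div_sq_add_sq_eq_arctan_sub_arctan (t a b : ℝ) {ε : ℝ} (hε : ε ≠ 0) :
    ∫ x in a..b, ε / ((t - x) ^ 2 + ε ^ 2)
      = arctan ((b - t) / ε) - arctan ((a - t) / ε) := by
  have hkernel : ∀ x, ε / ((t - x) ^ 2 + ε ^ 2) = ε⁻¹ * (1 + (x / ε - t / ε) ^ 2)⁻¹ := by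
    intro x
    field_simp
    ring
  simp_rw [hkernel, intervalIntegral.integral_const_mul,
    integral_comp_div_sub (fun x => (1 + x ^ 2)⁻¹) hε, integral_inv_one_add_sq, smul_eq_mul,
    ← mul_assoc, inv_mul_cancel₀ hε, one_mul, sub_div]

lemma div_sq_add_sq_le_inv (u : ℝ) {ε : ℝ} (hε : 0 < ε) : ε / (u ^ 2 + ε ^ 2) ≤ ε⁻¹ := by
  rw [div_le_iff₀ (by positivity)]
  field_simp
  nlinarith [sq_nonneg u]

lemma tendsto_arctan_div_nhdsGT_zero (c : ℝ) :
    Tendsto (fun ε => arctan (c / ε)) (𝓝[>] 0) (𝓝 (π / 2 * Real.sign c)) := by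
  have hpos : ∀ {c : ℝ}, 0 < c → Tendsto (fun ε => arctan (c / ε)) (𝓝[>] 0) (𝓝 (π / 2)) :=
    fun hc => (tendsto_arctan_atTop.mono_right nhdsWithin_le_nhds).comp
      (tendsto_inv_nhdsGT_zero.const_mul_atTop hc)
  rcases lt_trichotomy c 0 with hc | rfl | hc
  · simpa [Real.sign_of_neg hc, neg_div, arctan_neg] using (hpos (neg_pos.2 hc)).neg
  · simp
  · simpa [Real.sign_of_pos hc] using hpos hc

lemma abs_arctan_sub_arctan_lt_pi (u v : ℝ) : |arctan u - arctan v| < π := by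
  have hu := arctan_mem_Ioo u
  have hv := arctan_mem_Ioo v
  rw [abs_sub_lt_iff]
  constructor <;> linarith [hu.1, hu.2, hv.1, hv.2]

lemma sign_sub_sign_eq_indicator {a b : ℝ} (hab : a < b) (t : ℝ) :
    Real.sign (b - t) - Real.sign (a - t)
      = (Ioo a b).indicator (fun _ => 2) t + ({a, b} : Set ℝ).indicator (fun _ => 1) t := by
  rcases lt_trichotomy t a with hta | rfl | hat
  · simp [Real.sign_of_pos, hta, hta.trans hab, hta.ne, (hta.trans hab).ne, hta.not_gt]
  · simp [Real.sign_of_pos, hab]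
  rcases lt_trichotomy t b with htb | rfl | hbt
  · norm_num [Real.sign_of_pos, Real.sign_of_neg, hat, htb, hat.ne', htb.ne]
  · simp [Real.sign_of_neg, hab]
  · simp [Real.sign_of_neg, hat, hbt, hat.ne', hbt.ne', hbt.not_gt]

lemma integral_sign_sub_sign (μ : Measure ℝ) [IsFiniteMeasure μ] {a b : ℝ} (hab : a < b) :
    ∫ t, (Real.sign (b - t) - Real.sign (a - t)) ∂μ
      = 2 * (μ (Ioo a b)).toReal + (μ {a, b}).toReal := by
  have hpair : MeasurableSet ({a, b} : Set ℝ) := (Set.toFinite _).measurableSet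
  simp_rw [sign_sub_sign_eq_indicator hab]
  rw [integral_add ((integrable_const _).indicator measurableSet_Ioo)
    ((integrable_const _).indicator hpair), integral_indicator_const _ measurableSet_Ioo,
    integral_indicator_const _ hpair]
  simp [Measure.real, mul_comm]

lemma intervalIntegral_im_integral_inv_sub_eq_integral_arctan (μ : Measure ℝ) [IsFiniteMeasure μ]
    (a b : ℝ) {ε : ℝ} (hε : 0 < ε) :
    ∫ x in a..b, (∫ t : ℝ, ((t : ℂ) - (x + ε * Complex.I))⁻¹ ∂μ).im
      = ∫ t, (arctan ((b - t) / ε) - arctan ((a - t) / ε)) ∂μ := by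
  have : IsFiniteMeasure (volume.restrict (uIoc a b)) :=
    isFiniteMeasure_restrict.2 (by simp [uIoc])
  have hkernel_int : Integrable (Function.uncurry fun x t : ℝ => ε / ((t - x) ^ 2 + ε ^ 2))
      ((volume.restrict (uIoc a b)).prod μ) := by
    refine (integrable_const ε⁻¹).mono' (Continuous.aestronglyMeasurable ?_) ?_
    · exact continuous_const.div (by fun_prop) fun _ => by positivity
    · refine Eventually.of_forall fun p =>
        (Real.norm_of_nonneg ?_).trans_le (div_sq_add_sq_le_inv _ hε)
      exact div_nonneg hε.le (by positivity)
  calc ∫ x in a..b, (∫ t : ℝ, ((t : ℂ) - (x + ε * Complex.I))⁻¹ ∂μ).im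
      = ∫ x in a..b, ∫ t, ε / ((t - x) ^ 2 + ε ^ 2) ∂μ := by
        refine integral_congr fun x _ =>
          (integral_im (integrable_inv_ofReal_sub μ (by simpa using hε.ne'))).symm.trans ?_
        simp_rw [RCLike.im_to_complex, Complex.im_inv_ofReal_sub_ofReal_add_mul_I]
    _ = ∫ t, (∫ x in a..b, ε / ((t - x) ^ 2 + ε ^ 2)) ∂μ :=
        intervalIntegral_integral_swap hkernel_int
    _ = _ := by simp_rw [integral_div_sq_add_sq_eq_arctan_sub_arctan _ _ _ hε.ne']

lemma tendsto_integral_arctan_div_sub_arctan_div (μ : Measure ℝ) [IsFiniteMeasure μ] (a b : ℝ) :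
    Tendsto (fun ε => ∫ t, (arctan ((b - t) / ε) - arctan ((a - t) / ε)) ∂μ) (𝓝[>] 0)
      (𝓝 (∫ t, π / 2 * (Real.sign (b - t) - Real.sign (a - t)) ∂μ)) := by
  refine tendsto_integral_filter_of_dominated_convergence (fun _ => π)
    (Eventually.of_forall fun _ => by fun_prop)
    (Eventually.of_forall fun _ => Eventually.of_forall fun _ =>
      (abs_arctan_sub_arctan_lt_pi _ _).le) (integrable_const π)
    (Eventually.of_forall fun t => ?_)
  rw [mul_sub]
  exact (tendsto_arctan_div_nhdsGT_zero _).sub (tendsto_arctan_div_nhdsGT_zero _)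

/-- Stieltjes inversion formula: for a finite Borel measure `μ` on `ℝ` with
Stieltjes transform `S` and any `a < b`,
`lim_{ε↘0} (1/π) ∫_a^b Im S(x + iε) dx = μ((a,b)) + (1/2) μ({a,b})`. -/
theorem stieltjes_inversion (μ : Measure ℝ) [IsFiniteMeasure μ] (a b : ℝ) (hab : a < b) :
    Tendsto
      (fun ε : ℝ =>
        (1 / Real.pi) *
          ∫ x in a..b, (∫ t : ℝ, ((t : ℂ) - (x + ε * Complex.I))⁻¹ ∂μ).im)
      (nhdsWithin 0 (Set.Ioi 0))
      (nhds ((μ (Set.Ioo a b)).toReal + (1 / 2) * (μ {a, b}).toReal)) := by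
  have hlim := (tendsto_integral_arctan_div_sub_arctan_div μ a b).const_mul (1 / π)
  rw [MeasureTheory.integral_const_mul, integral_sign_sub_sign μ hab] at hlim
  convert hlim.congr' _ using 2
  · field_simp
  · filter_upwards [self_mem_nhdsWithin] with ε hε
    rw [intervalIntegral_im_integral_inv_sub_eq_integral_arctan μ a b hε]
end

section
/- The Stieltjes transform S of the semicircle distribution satisfies the quadratic equation S(z)² + z S(z) + 1 = 0 for all z in the upper half plane, and is explicitly given by S(z) = (-z + √(z²-4))/2 (with the branch chosen so that S(z) ∈ ℂ⁺). -/
open MeasureTheory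

/-- The semicircle distribution, with density `(1/(2π))√(4-t²)` on `[-2,2]`. -/
noncomputable def semicircleMeasure : Measure ℝ :=
  volume.withDensity fun t => ENNReal.ofReal ((1 / (2 * Real.pi)) * Real.sqrt (4 - t ^ 2))

/-- The Stieltjes transform of the semicircle distribution. -/
noncomputable def semicircleStieltjes (z : ℂ) : ℂ :=
  ∫ t : ℝ, ((t : ℂ) - z)⁻¹ ∂semicircleMeasure

/-!
Write `z = ω + ω⁻¹` with `1 < ‖ω‖`; this is possible off the real axis because the Joukowski map
`ω ↦ ω + ω⁻¹` sends the unit circle onto `[-2, 2]`. Then `S(z) = -ω⁻¹`. Indeed, splitting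
`4 - t² = (4 - z²) - (t - z)(t + z)` with `4 - z² = -(ω - ω⁻¹)²`, the integrand `√(4 - t²) / (t - z)`
has on `[-2, 2]` the explicit primitive
`√(4 - t²) - z arcsin (t / 2) + i (ω - ω⁻¹) log (-i (ωτ - 1) / (ω - τ))`,
where `τ` is the point of the upper unit semicircle with `τ + τ⁻¹ = t`. Finally
`w² + zw + 1 = (w + ω)(w + ω⁻¹)`, and of the two roots only `-ω⁻¹` lies in the upper half plane.
-/

open Complex Set

lemma semicircleStieltjes_eq_intervalIntegral (z : ℂ) :
    semicircleStieltjes z =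
      (2 * Real.pi : ℂ)⁻¹ * ∫ t in (-2 : ℝ)..2, (√(4 - t ^ 2) : ℂ) / (t - z) := by
  have hvanish : ∀ t ∉ Ioc (-2 : ℝ) 2,
      (ENNReal.ofReal ((1 / (2 * Real.pi)) * √(4 - t ^ 2))).toReal • ((t : ℂ) - z)⁻¹ = 0 := by
    intro t ht
    have h : 4 - t ^ 2 ≤ 0 := by
      rw [mem_Ioc, not_and_or, not_lt, not_le] at ht
      rcases ht with h | h <;> nlinarith
    simp [Real.sqrt_eq_zero_of_nonpos h]
  rw [semicircleStieltjes, semicircleMeasure, integral_withDensity_eq_integral_toReal_smul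
    (by fun_prop) (ae_of_all _ fun _ => ENNReal.ofReal_lt_top),
    ← setIntegral_eq_integral_of_forall_compl_eq_zero hvanish,
    intervalIntegral.integral_of_le (by norm_num), ← integral_const_mul]
  refine setIntegral_congr_fun measurableSet_Ioc fun t _ => ?_
  rw [ENNReal.toReal_ofReal (by positivity), Complex.real_smul]
  push_cast
  ring

lemma sq_sqrt_four_sub_sq {t : ℝ} (ht : t ∈ Icc (-2 : ℝ) 2) : √(4 - t ^ 2) ^ 2 = 4 - t ^ 2 :=
  Real.sq_sqrt (by nlinarith [ht.1, ht.2])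

lemma sqrt_four_sub_sq_pos {t : ℝ} (ht : t ∈ Ioo (-2 : ℝ) 2) : 0 < √(4 - t ^ 2) :=
  Real.sqrt_pos.mpr (by nlinarith [ht.1, ht.2])

/-- The point `e^{iθ}` of the closed upper unit semicircle, where `t = 2 cos θ`. -/
noncomputable def circleLift (t : ℝ) : ℂ := (t + √(4 - t ^ 2) * I) / 2

lemma circleLift_inv {t : ℝ} (ht : t ∈ Icc (-2 : ℝ) 2) :
    (circleLift t)⁻¹ = (t - √(4 - t ^ 2) * I) / 2 := by
  refine inv_eq_of_mul_eq_one_right ?_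
  have hs : ((√(4 - t ^ 2) : ℝ) : ℂ) ^ 2 = 4 - (t : ℂ) ^ 2 := by
    exact_mod_cast sq_sqrt_four_sub_sq ht
  rw [circleLift]
  linear_combination (-(√(4 - t ^ 2) : ℂ) ^ 2 / 4) * I_sq + hs / 4

lemma circleLift_add_inv {t : ℝ} (ht : t ∈ Icc (-2 : ℝ) 2) :
    circleLift t + (circleLift t)⁻¹ = t := by
  rw [circleLift_inv ht, circleLift]; ring

lemma norm_circleLift {t : ℝ} (ht : t ∈ Icc (-2 : ℝ) 2) : ‖circleLift t‖ = 1 := by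
  have h : normSq (circleLift t) = 1 := by
    simp only [circleLift, normSq_apply, div_re, div_im, add_re, add_im, mul_re, mul_im,
      ofReal_re, ofReal_im, I_re, I_im, re_ofNat, im_ofNat]
    nlinarith [sq_sqrt_four_sub_sq ht]
  rwa [normSq_eq_norm_sq, pow_eq_one_iff_of_nonneg (norm_nonneg _) two_ne_zero] at h

lemma circleLift_im (t : ℝ) : (circleLift t).im = √(4 - t ^ 2) / 2 := by
  simp [circleLift]

lemma circleLift_two : circleLift 2 = 1 := by norm_num [circleLift]

lemma circleLift_neg_two : circleLift (-2) = -1 := by norm_num [circleLift]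

@[fun_prop]
lemma continuous_circleLift : Continuous circleLift := by
  unfold circleLift; fun_prop

lemma hasDerivAt_sqrt_four_sub_sq {t : ℝ} (ht : t ∈ Ioo (-2 : ℝ) 2) :
    HasDerivAt (fun t => √(4 - t ^ 2)) (-t / √(4 - t ^ 2)) t := by
  convert ((hasDerivAt_pow 2 t).const_sub 4).sqrt (Real.sqrt_pos.mp (sqrt_four_sub_sq_pos ht)).ne'
    using 1
  field_simp
  ring

lemma hasDerivAt_arcsin_half {t : ℝ} (ht : t ∈ Ioo (-2 : ℝ) 2) :
    HasDerivAt (fun t => Real.arcsin (t / 2)) (1 / √(4 - t ^ 2)) t := by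
  have h1 : t / 2 ≠ -1 := by linarith [ht.1]
  have h2 : t / 2 ≠ 1 := by linarith [ht.2]
  refine ((Real.hasDerivAt_arcsin h1 h2).comp t ((hasDerivAt_id t).div_const 2)).congr_deriv ?_
  rw [show 1 - (t / 2) ^ 2 = (4 - t ^ 2) / 2 ^ 2 by ring, Real.sqrt_div' _ (by norm_num),
    Real.sqrt_sq (by norm_num)]
  have := (sqrt_four_sub_sq_pos ht).ne'
  field_simp

lemma hasDerivAt_circleLift {t : ℝ} (ht : t ∈ Ioo (-2 : ℝ) 2) :
    HasDerivAt circleLift (-I * circleLift t / √(4 - t ^ 2)) t := by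
  have hs : (√(4 - t ^ 2) : ℂ) ≠ 0 := by exact_mod_cast (sqrt_four_sub_sq_pos ht).ne'
  refine ((((hasDerivAt_id t).ofReal_comp).add
    ((hasDerivAt_sqrt_four_sub_sq ht).ofReal_comp.mul_const I)).div_const 2).congr_deriv ?_
  rw [circleLift]
  push_cast
  field_simp
  linear_combination (√(4 - t ^ 2) : ℂ) * I_sq

section

variable {ω : ℂ}

lemma sub_ne_zero_of_norm_eq_one (hω : 1 < ‖ω‖) {τ : ℂ} (hτ : ‖τ‖ = 1) : ω - τ ≠ 0 := by
  rw [sub_ne_zero]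
  rintro rfl
  linarith

lemma mul_sub_one_ne_zero_of_norm_eq_one (hω : 1 < ‖ω‖) {τ : ℂ} (hτ : ‖τ‖ = 1) :
    ω * τ - 1 ≠ 0 := by
  rw [sub_ne_zero]
  intro h
  have := congrArg norm h
  rw [norm_mul, hτ, mul_one, norm_one] at this
  linarith

lemma add_inv_sub_add_inv {τ : ℂ} (hω : ω ≠ 0) (hτ : τ ≠ 0) :
    τ + τ⁻¹ - (ω + ω⁻¹) = -((ω - τ) * (ω * τ - 1)) / (ω * τ) := by
  field_simp
  ring

lemma im_div_of_norm_eq_one {τ : ℂ} (hτ : ‖τ‖ = 1) :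
    ((ω * τ - 1) / (ω - τ)).im = (normSq ω - 1) * τ.im / normSq (ω - τ) := by
  have h : τ.re ^ 2 + τ.im ^ 2 = 1 := by
    have := normSq_eq_norm_sq τ
    rw [hτ, normSq_apply] at this
    linear_combination this
  rw [div_im, ← sub_div]
  congr 1
  simp only [normSq_apply, sub_re, sub_im, mul_re, mul_im, one_re, one_im]
  linear_combination (-ω.im) * h

lemma neg_I_mul_mem_slitPlane {w : ℂ} (h0 : w ≠ 0) (him : 0 ≤ w.im) : -I * w ∈ slitPlane := by
  rw [mem_slitPlane_iff]
  simp only [neg_mul, neg_re, neg_im, I_mul_re, I_mul_im, neg_neg, ne_eq, neg_eq_zero]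
  by_contra! h
  exact h0 (ext h.2 (le_antisymm h.1 him))

lemma mem_slitPlane_circleLift (hω : 1 < ‖ω‖) {t : ℝ} (ht : t ∈ Icc (-2 : ℝ) 2) :
    -I * ((ω * circleLift t - 1) / (ω - circleLift t)) ∈ slitPlane := by
  have hτ := norm_circleLift ht
  refine neg_I_mul_mem_slitPlane (div_ne_zero (mul_sub_one_ne_zero_of_norm_eq_one hω hτ)
    (sub_ne_zero_of_norm_eq_one hω hτ)) ?_
  rw [im_div_of_norm_eq_one hτ, circleLift_im]
  have : 1 ≤ normSq ω := by rw [normSq_eq_norm_sq]; nlinarith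
  have := Real.sqrt_nonneg (4 - t ^ 2)
  have := normSq_nonneg (ω - circleLift t)
  positivity

lemma hasDerivAt_log_circleLift (hω : 1 < ‖ω‖) {t : ℝ} (ht : t ∈ Ioo (-2 : ℝ) 2) :
    HasDerivAt (fun t => log (-I * ((ω * circleLift t - 1) / (ω - circleLift t))))
      (I * (ω - ω⁻¹) / ((t - (ω + ω⁻¹)) * √(4 - t ^ 2))) t := by
  have htc := Ioo_subset_Icc_self ht
  have hτ := norm_circleLift htc
  have hτ0 : circleLift t ≠ 0 := norm_ne_zero_iff.mp (by rw [hτ]; norm_num)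
  have hω0 : ω ≠ 0 := norm_pos_iff.mp (by linarith)
  have hden := sub_ne_zero_of_norm_eq_one hω hτ
  have hnum := mul_sub_one_ne_zero_of_norm_eq_one hω hτ
  have hs : (√(4 - t ^ 2) : ℂ) ≠ 0 := by exact_mod_cast (sqrt_four_sub_sq_pos ht).ne'
  have hτ' := hasDerivAt_circleLift ht
  have hmob := ((((hτ'.const_mul ω).sub_const 1).div (hτ'.const_sub ω) hden).const_mul (-I))
  refine (hmob.clog_real (mem_slitPlane_circleLift hω htc)).congr_deriv ?_
  simp only [Pi.div_apply]
  rw [← circleLift_add_inv htc, add_inv_sub_add_inv hω0 hτ0]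
  field_simp
  ring

lemma sub_add_inv_ne_zero (hω : 1 < ‖ω‖) {t : ℝ} (ht : t ∈ Icc (-2 : ℝ) 2) :
    (t : ℂ) - (ω + ω⁻¹) ≠ 0 := by
  have hτ := norm_circleLift ht
  have hτ0 : circleLift t ≠ 0 := norm_ne_zero_iff.mp (by rw [hτ]; norm_num)
  have hω0 : ω ≠ 0 := norm_pos_iff.mp (by linarith)
  rw [← circleLift_add_inv ht, add_inv_sub_add_inv hω0 hτ0]
  exact div_ne_zero (neg_ne_zero.mpr (mul_ne_zero (sub_ne_zero_of_norm_eq_one hω hτ)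
    (mul_sub_one_ne_zero_of_norm_eq_one hω hτ))) (mul_ne_zero hω0 hτ0)

/-- The Möbius image of the upper unit semicircle lies in the closed upper half plane, which `-I`
turns away from the branch cut of `log`. -/
noncomputable def semicirclePrimitive (ω : ℂ) (t : ℝ) : ℂ :=
  √(4 - t ^ 2) - (ω + ω⁻¹) * Real.arcsin (t / 2)
    + I * (ω - ω⁻¹) * log (-I * ((ω * circleLift t - 1) / (ω - circleLift t)))

lemma continuousOn_semicirclePrimitive (hω : 1 < ‖ω‖) :
    ContinuousOn (semicirclePrimitive ω) (Icc (-2) 2) := by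
  have hmob : ContinuousOn (fun t => -I * ((ω * circleLift t - 1) / (ω - circleLift t)))
      (Icc (-2) 2) := by
    refine ContinuousOn.mul continuousOn_const (ContinuousOn.div (by fun_prop) (by fun_prop) ?_)
    exact fun t ht => sub_ne_zero_of_norm_eq_one hω (norm_circleLift ht)
  have hlog : ContinuousOn (fun t => log (-I * ((ω * circleLift t - 1) / (ω - circleLift t))))
      (Icc (-2) 2) :=
    fun t ht => (hmob t ht).clog (mem_slitPlane_circleLift hω ht)
  unfold semicirclePrimitive
  fun_prop

lemma hasDerivAt_semicirclePrimitive (hω : 1 < ‖ω‖) {t : ℝ} (ht : t ∈ Ioo (-2 : ℝ) 2) :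
    HasDerivAt (semicirclePrimitive ω) (√(4 - t ^ 2) / (t - (ω + ω⁻¹))) t := by
  have hsub := sub_add_inv_ne_zero hω (Ioo_subset_Icc_self ht)
  have hs : (√(4 - t ^ 2) : ℂ) ≠ 0 := by exact_mod_cast (sqrt_four_sub_sq_pos ht).ne'
  have hs2 : (√(4 - t ^ 2) : ℂ) ^ 2 = 4 - t ^ 2 := by
    exact_mod_cast sq_sqrt_four_sub_sq (Ioo_subset_Icc_self ht)
  have hzd : (ω + ω⁻¹) ^ 2 - (ω - ω⁻¹) ^ 2 = 4 := by
    have hω0 : ω ≠ 0 := norm_pos_iff.mp (by linarith)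
    field_simp
    ring
  refine ((((hasDerivAt_sqrt_four_sub_sq ht).ofReal_comp).sub
    ((hasDerivAt_arcsin_half ht).ofReal_comp.const_mul (ω + ω⁻¹))).add
    ((hasDerivAt_log_circleLift hω ht).const_mul (I * (ω - ω⁻¹)))).congr_deriv ?_
  generalize ω + ω⁻¹ = z at *
  generalize ω - ω⁻¹ = d at *
  push_cast
  field_simp
  linear_combination hzd - hs2 + d ^ 2 * I_sq

lemma semicirclePrimitive_two_sub_neg_two (hω : 1 < ‖ω‖) :
    semicirclePrimitive ω 2 - semicirclePrimitive ω (-2) = -(2 * Real.pi) * ω⁻¹ := by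
  have hp : (ω * 1 - 1) / (ω - 1) = 1 := by
    rw [mul_one, div_self (sub_ne_zero_of_norm_eq_one hω norm_one)]
  have hm : (ω * -1 - 1) / (ω - -1) = -1 := by
    rw [div_eq_iff (sub_ne_zero_of_norm_eq_one hω (by rw [norm_neg, norm_one]))]
    ring
  simp only [semicirclePrimitive, circleLift_two, circleLift_neg_two, hp, hm]
  norm_num [Real.arcsin_neg_one, log_neg_I, log_I]
  have hω0 : ω ≠ 0 := norm_pos_iff.mp (by linarith)
  field_simp
  linear_combination 2 * (1 - ω ^ 2) * I_sq

lemma integral_sqrt_four_sub_sq_div_sub_add_inv (hω : 1 < ‖ω‖) :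
    ∫ t in (-2 : ℝ)..2, (√(4 - t ^ 2) : ℂ) / (t - (ω + ω⁻¹)) = -(2 * Real.pi) * ω⁻¹ := by
  have hint : ContinuousOn (fun t : ℝ => (√(4 - t ^ 2) : ℂ) / (t - (ω + ω⁻¹))) (Icc (-2) 2) :=
    ContinuousOn.div (by fun_prop) (by fun_prop) fun t ht => sub_add_inv_ne_zero hω ht
  rw [intervalIntegral.integral_eq_sub_of_hasDerivAt_of_le (by norm_num)
    (continuousOn_semicirclePrimitive hω) (fun t ht => hasDerivAt_semicirclePrimitive hω ht)
    (hint.intervalIntegrable_of_Icc (by norm_num)), semicirclePrimitive_two_sub_neg_two hω]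

theorem semicircleStieltjes_add_inv (hω : 1 < ‖ω‖) : semicircleStieltjes (ω + ω⁻¹) = -ω⁻¹ := by
  rw [semicircleStieltjes_eq_intervalIntegral, integral_sqrt_four_sub_sq_div_sub_add_inv hω]
  have : (2 * Real.pi : ℂ) ≠ 0 := by exact_mod_cast Real.two_pi_pos.ne'
  field_simp

lemma im_add_inv : (ω + ω⁻¹).im = ω.im * (1 - (normSq ω)⁻¹) := by
  rw [add_im, inv_im]
  ring

lemma exists_one_lt_norm_add_inv_eq {z : ℂ} (hz : z.im ≠ 0) :
    ∃ ω : ℂ, 1 < ‖ω‖ ∧ ω + ω⁻¹ = z := by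
  obtain ⟨d, hd⟩ := IsAlgClosed.exists_pow_nat_eq (z ^ 2 - 4) two_pos
  have hprod : (z + d) / 2 * ((z - d) / 2) = 1 := by linear_combination -hd / 4
  set ω := (z + d) / 2
  have hω0 : ω ≠ 0 := left_ne_zero_of_mul_eq_one hprod
  have hωz : ω + ω⁻¹ = z := by
    rw [inv_eq_of_mul_eq_one_right hprod]
    ring
  rcases lt_trichotomy ‖ω‖ 1 with h | h | h
  · refine ⟨ω⁻¹, ?_, by rw [inv_inv, add_comm, hωz]⟩
    rwa [norm_inv, one_lt_inv₀ (norm_pos_iff.mpr hω0)]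
  · refine absurd ?_ hz
    rw [← hωz, im_add_inv, normSq_eq_norm_sq, h]
    ring
  · exact ⟨ω, h, hωz⟩

end

/-- On the upper half plane, the Stieltjes transform `S` of the semicircle
distribution satisfies `S(z)² + z S(z) + 1 = 0`, takes values in the upper half
plane, and is the unique solution of this quadratic equation lying in `ℂ⁺`
(i.e. it equals `(-z + √(z²-4))/2` with the branch of the square root chosen
so that `S(z) ∈ ℂ⁺`). -/
theorem semicircle_stieltjes_transform (z : ℂ) (hz : 0 < z.im) :
    0 < (semicircleStieltjes z).im ∧
    (semicircleStieltjes z) ^ 2 + z * semicircleStieltjes z + 1 = 0 ∧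
    ∀ w : ℂ, 0 < w.im → w ^ 2 + z * w + 1 = 0 → w = semicircleStieltjes z := by
  obtain ⟨ω, hω, rfl⟩ := exists_one_lt_norm_add_inv_eq hz.ne'
  have hω0 : ω ≠ 0 := norm_pos_iff.mp (by linarith)
  have hnormSq : 1 < normSq ω := by rw [normSq_eq_norm_sq]; nlinarith
  have hωim : 0 < ω.im := by
    rw [im_add_inv] at hz
    exact pos_of_mul_pos_left hz (sub_nonneg.mpr (inv_le_one_of_one_le₀ hnormSq.le))
  rw [semicircleStieltjes_add_inv hω]
  refine ⟨?_, by field_simp; ring, fun w hw hquad => ?_⟩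
  · rw [neg_im, inv_im, neg_div, neg_neg]
    exact div_pos hωim (by linarith)
  · have hfactor : (w + ω) * (w + ω⁻¹) = 0 := by
      linear_combination hquad + mul_inv_cancel₀ hω0
    rcases mul_eq_zero.mp hfactor with h | h
    · have : w.im = -ω.im := by rw [eq_neg_of_add_eq_zero_left h, neg_im]
      linarith
    · exact eq_neg_of_add_eq_zero_left h
end
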